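/- arXiv:2212.07654 — 4 statements merged into one kernel-verified Lean document; each statement's English description precedes it below -/
import Mathlib

section
/- For every p ∈ [1,∞] there exists a constant C > 0, depending only on p and on the wave strength ω₊ − ω₋, such that for all δ > 0 and all t ≥ 0 one has ‖∂_xω(t,·)‖_{L^p(ℝ)} ≤ C·(δ + t)^{−1 + 1/p}, where we set 1/p := 0 when p = ∞ and the L^p norm is taken with respect to Lebesgue measure on ℝ. -/
/-!
Along characteristics `x = y + t g(y)` the slope of `ω(t, ·)` is `g'(y) / (1 + t g'(y))`.
It is nonnegative, and since `0 ≤ g' ≤ s / (2δ)` it is at most `s / (2δ + t s) ≲ (δ + t)⁻¹`;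
its integral is the total increase `ω₊ − ω₋ = s` of `ω(t, ·)`. The `L^p` bound is the
interpolation `‖f‖_p ≤ ‖f‖_∞^{1 - 1/p} ‖f‖_1^{1/p}` between these two estimates.
-/

open MeasureTheory Set Filter Function Real

theorem Real.hasDerivAt_tanh (x : ℝ) : HasDerivAt tanh (cosh x ^ 2)⁻¹ x := by
  have h := (hasDerivAt_sinh x).div (hasDerivAt_cosh x) (cosh_pos x).ne'
  rw [show sinh / cosh = tanh from funext fun y => (tanh_eq_sinh_div_cosh y).symm] at h
  refine h.congr_deriv ?_
  rw [inv_eq_one_div, ← cosh_sq_sub_sinh_sq x]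
  ring

theorem hasDerivAt_const_add_mul_tanh_div (a b δ y : ℝ) :
    HasDerivAt (fun x => a + b * tanh (x / δ)) (b / δ / cosh (y / δ) ^ 2) y := by
  have h := ((hasDerivAt_tanh (y / δ)).comp y ((hasDerivAt_id y).div_const δ)).const_mul b
  refine (h.const_add a).congr_deriv ?_
  field_simp

theorem mul_div_div_cosh_sq_le {b δ : ℝ} (hb : 0 ≤ b) (hδ : 0 < δ) (y : ℝ) :
    δ * (b / δ / cosh (y / δ) ^ 2) ≤ b := by
  calc δ * (b / δ / cosh (y / δ) ^ 2) = b / cosh (y / δ) ^ 2 := by field_simp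
    _ ≤ b := div_le_self hb (one_le_pow₀ (one_le_cosh _))

theorem midpoint_add_mul_tanh_mem_Icc {a b : ℝ} (hab : a ≤ b) (x : ℝ) :
    (b + a) / 2 + (b - a) / 2 * tanh x ∈ Icc a b := by
  constructor <;> nlinarith [neg_one_lt_tanh x, tanh_lt_one x]

theorem ENNReal.one_div_toReal_le_one {p : ENNReal} (hp : 1 ≤ p) : 1 / p.toReal ≤ 1 := by
  rcases eq_or_ne p ⊤ with rfl | hp_top
  · simp
  · exact div_le_one_of_le₀ (by simpa using ENNReal.toReal_mono hp_top hp) ENNReal.toReal_nonneg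

theorem eLpNorm_le_eLpNorm_top_rpow_mul_eLpNorm_one_rpow {α E : Type*} [MeasurableSpace α]
    [NormedAddCommGroup E] {μ : Measure α} {f : α → E} (hf : AEStronglyMeasurable f μ)
    {p : ENNReal} (hp : 1 ≤ p) :
    eLpNorm f p μ ≤ eLpNorm f ⊤ μ ^ (1 - 1 / p.toReal) * eLpNorm f 1 μ ^ (1 / p.toReal) := by
  rcases eq_or_ne p ⊤ with rfl | hp_top
  · simp
  have hq : 1 ≤ p.toReal := by simpa using ENNReal.toReal_mono hp_top hp
  set N := eLpNorm f ⊤ μ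
  have hpow : ∫⁻ x, ‖f x‖ₑ ^ p.toReal ∂μ ≤ N ^ (p.toReal - 1) * ∫⁻ x, ‖f x‖ₑ ∂μ := by
    rw [← lintegral_const_mul'' _ hf.enorm]
    refine lintegral_mono_ae ?_
    filter_upwards [eLpNorm_exponent_top (f := f) ▸ enorm_ae_le_eLpNormEssSup f μ] with x hx
    calc ‖f x‖ₑ ^ p.toReal = ‖f x‖ₑ ^ (p.toReal - 1) * ‖f x‖ₑ ^ (1 : ℝ) := by
          rw [← ENNReal.rpow_add_of_nonneg _ _ (by linarith) zero_le_one, sub_add_cancel]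
      _ ≤ N ^ (p.toReal - 1) * ‖f x‖ₑ := by
          rw [ENNReal.rpow_one]
          gcongr
  rw [eLpNorm_eq_lintegral_rpow_enorm_toReal (zero_lt_one.trans_le hp).ne' hp_top,
    eLpNorm_one_eq_lintegral_enorm]
  calc (∫⁻ x, ‖f x‖ₑ ^ p.toReal ∂μ) ^ (1 / p.toReal)
      ≤ (N ^ (p.toReal - 1) * ∫⁻ x, ‖f x‖ₑ ∂μ) ^ (1 / p.toReal) := by gcongr
    _ = N ^ (1 - 1 / p.toReal) * (∫⁻ x, ‖f x‖ₑ ∂μ) ^ (1 / p.toReal) := by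
      rw [ENNReal.mul_rpow_of_nonneg _ _ (by positivity), ← ENNReal.rpow_mul]
      congr 2
      field_simp

section MonotoneBounded

variable {F f : ℝ → ℝ} {a b : ℝ}

theorem measurable_of_forall_hasDerivAt (hF : ∀ x, HasDerivAt F (f x) x) : Measurable f := by
  rw [show f = deriv F from funext fun x => (hF x).deriv.symm]
  exact measurable_deriv F

theorem eLpNorm_one_le_of_hasDerivAt_of_mem_Icc (hF : ∀ x, HasDerivAt F (f x) x)
    (hf : ∀ x, 0 ≤ f x) (hFab : ∀ x, F x ∈ Icc a b) :
    eLpNorm f 1 volume ≤ ENNReal.ofReal (b - a) := by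
  have hmeas := measurable_of_forall_hasDerivAt hF
  have hcover : AECover volume atTop fun n : ℕ => Ioc (-(n : ℝ)) n :=
    aecover_Ioc (tendsto_neg_atTop_atBot.comp tendsto_natCast_atTop_atTop)
      tendsto_natCast_atTop_atTop
  simp_rw [eLpNorm_one_eq_lintegral_enorm, Real.enorm_eq_ofReal (hf _),
    ← hcover.iSup_lintegral_eq_of_countably_generated hmeas.ennreal_ofReal.aemeasurable]
  refine iSup_le fun n => ?_
  have hint : IntegrableOn f (Ioc (-(n : ℝ)) n) :=
    intervalIntegral.integrableOn_deriv_of_nonneg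
      (fun x _ => (hF x).continuousAt.continuousWithinAt) (fun x _ => hF x) fun x _ => hf x
  have hn : -(n : ℝ) ≤ n := by linarith [n.cast_nonneg (α := ℝ)]
  rw [← ofReal_integral_eq_lintegral_ofReal hint (ae_of_all _ hf),
    ← intervalIntegral.integral_of_le hn,
    intervalIntegral.integral_eq_sub_of_hasDerivAt (fun x _ => hF x)
      ((intervalIntegrable_iff_integrableOn_Ioc_of_le hn).mpr hint)]
  exact ENNReal.ofReal_le_ofReal (by linarith [(hFab n).2, (hFab (-n)).1])

theorem eLpNorm_le_of_hasDerivAt_of_mem_Icc (hF : ∀ x, HasDerivAt F (f x) x)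
    (hf : ∀ x, 0 ≤ f x) {M : ℝ} (hfM : ∀ x, f x ≤ M) (hFab : ∀ x, F x ∈ Icc a b)
    {p : ENNReal} (hp : 1 ≤ p) :
    eLpNorm f p volume
      ≤ ENNReal.ofReal M ^ (1 - 1 / p.toReal) * ENNReal.ofReal (b - a) ^ (1 / p.toReal) := by
  have hf_top : eLpNorm f ⊤ volume ≤ ENNReal.ofReal M := by
    rw [eLpNorm_exponent_top]
    exact eLpNormEssSup_le_of_ae_bound
      (ae_of_all _ fun x => (Real.norm_of_nonneg (hf x)).trans_le (hfM x))
  have hr : 0 ≤ 1 - 1 / p.toReal := sub_nonneg.mpr (ENNReal.one_div_toReal_le_one hp)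
  calc eLpNorm f p volume
      ≤ eLpNorm f ⊤ volume ^ (1 - 1 / p.toReal) * eLpNorm f 1 volume ^ (1 / p.toReal) :=
        eLpNorm_le_eLpNorm_top_rpow_mul_eLpNorm_one_rpow
          (measurable_of_forall_hasDerivAt hF).aestronglyMeasurable hp
    _ ≤ _ := by
        gcongr
        exact eLpNorm_one_le_of_hasDerivAt_of_mem_Icc hF hf hFab

end MonotoneBounded

theorem hasDerivAt_inverse_of_deriv_pos {F F' Y : ℝ → ℝ} (hF : ∀ y, HasDerivAt F (F' y) y)
    (hF' : ∀ y, 0 < F' y) (hl : LeftInverse Y F) (hr : RightInverse Y F) (x : ℝ) :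
    HasDerivAt Y (F' (Y x))⁻¹ x := by
  have hF_mono : StrictMono F := strictMono_of_deriv_pos fun y => (hF y).deriv ▸ hF' y
  have hY_mono : Monotone Y := fun a b hab => hF_mono.le_iff_le.mp (by rwa [hr a, hr b])
  exact (hF (Y x)).of_local_left_inverse
    (hY_mono.continuous_of_surjective hl.surjective).continuousAt (hF' _).ne'
    (Eventually.of_forall hr)

theorem hasDerivAt_comp_characteristic_inverse {g g' Y : ℝ → ℝ} {t : ℝ}
    (hg : ∀ y, HasDerivAt g (g' y) y) (hg' : ∀ y, 0 ≤ g' y) (ht : 0 ≤ t)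
    (hl : LeftInverse Y fun y => y + t * g y) (hr : RightInverse Y fun y => y + t * g y)
    (x : ℝ) : HasDerivAt (fun x => g (Y x)) (g' (Y x) / (1 + t * g' (Y x))) x := by
  have hF : ∀ y, HasDerivAt (fun y => y + t * g y) (1 + t * g' y) y := fun y =>
    (hasDerivAt_id y).add ((hg y).const_mul t)
  have hF' : ∀ y, 0 < 1 + t * g' y := fun y => by nlinarith [mul_nonneg ht (hg' y)]
  rw [div_eq_mul_inv]
  exact (hg (Y x)).comp x (hasDerivAt_inverse_of_deriv_pos hF hF' hl hr x)

theorem div_one_add_mul_le_max_div {a s δ t : ℝ} (ha : 0 ≤ a) (has : δ * a ≤ s / 2)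
    (hδ : 0 < δ) (ht : 0 ≤ t) : a / (1 + t * a) ≤ max (s / 2) 1 / (δ + t) := by
  have h1 : s / 2 ≤ max (s / 2) 1 := le_max_left _ _
  have h2 : 1 ≤ max (s / 2) 1 := le_max_right _ _
  rw [div_le_div_iff₀ (by nlinarith [mul_nonneg ht ha]) (by linarith)]
  nlinarith [mul_nonneg ht ha, mul_nonneg (mul_nonneg ht ha) (sub_nonneg.mpr h2)]

theorem ofReal_div_rpow_mul_ofReal_rpow {C d s r : ℝ} (hC : 0 ≤ C) (hd : 0 < d) (hs : 0 ≤ s)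
    (hr₀ : 0 ≤ r) (hr₁ : r ≤ 1) :
    ENNReal.ofReal (C / d) ^ (1 - r) * ENNReal.ofReal s ^ r
      = ENNReal.ofReal (C ^ (1 - r) * s ^ r * d ^ (-1 + r)) := by
  rw [ENNReal.ofReal_rpow_of_nonneg (by positivity) (by linarith),
    ENNReal.ofReal_rpow_of_nonneg hs hr₀, ← ENNReal.ofReal_mul (by positivity),
    Real.div_rpow hC hd.le, show -1 + r = -(1 - r) by ring, Real.rpow_neg hd.le]
  ring_nf

/-- `L^p` decay of the spatial derivative of the smooth approximate rarefaction wave: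
`‖∂_xω(t,·)‖_{L^p(ℝ)} ≤ C (δ+t)^{-1+1/p}` with `C` depending only on `p` and on the
wave strength `s = ω₊ − ω₋`, uniformly in `δ > 0` and `t ≥ 0`.  (With the convention
`1/p = 0` when `p = ∞`, which in Lean is automatic since `(⊤ : ℝ≥0∞).toReal = 0`.) -/
theorem burgers_deriv_Lp_bound
    (p : ENNReal) (hp : 1 ≤ p) (s : ℝ) (hs : 0 < s) :
    ∃ C : ℝ, 0 < C ∧
      ∀ ωm ωp : ℝ, ωm < ωp → ωp - ωm = s →
      ∀ δ : ℝ, 0 < δ →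
      ∀ g : ℝ → ℝ,
        (∀ x : ℝ, g x = (ωp + ωm) / 2 + ((ωp - ωm) / 2) * Real.tanh (x / δ)) →
      ∀ Y : ℝ → ℝ → ℝ,
        (∀ t : ℝ, 0 ≤ t →
          Function.LeftInverse (Y t) (fun y : ℝ => y + t * g y) ∧
          Function.RightInverse (Y t) (fun y : ℝ => y + t * g y)) →
      ∀ ω : ℝ → ℝ → ℝ, (∀ t x : ℝ, ω t x = g (Y t x)) →
      ∀ t : ℝ, 0 ≤ t →
        eLpNorm (fun x : ℝ => deriv (fun z : ℝ => ω t z) x) p volume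
          ≤ ENNReal.ofReal (C * (δ + t) ^ (-1 + 1 / p.toReal)) := by
  set r := 1 / p.toReal
  refine ⟨max (s / 2) 1 ^ (1 - r) * s ^ r, by positivity, ?_⟩
  rintro ωm ωp hlt rfl δ hδ g hg Y hY ω hω t ht
  obtain ⟨hl, hr⟩ := hY t ht
  set g' : ℝ → ℝ := fun y => (ωp - ωm) / 2 / δ / cosh (y / δ) ^ 2
  have hg_deriv : ∀ y, HasDerivAt g (g' y) y := fun y =>
    funext hg ▸ hasDerivAt_const_add_mul_tanh_div _ _ δ y
  have hg'_nonneg : ∀ y, 0 ≤ g' y := fun y => by positivity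
  have hω_deriv : ∀ x, HasDerivAt (ω t) (g' (Y t x) / (1 + t * g' (Y t x))) x := by
    rw [show ω t = fun x => g (Y t x) from funext (hω t)]
    exact hasDerivAt_comp_characteristic_inverse hg_deriv hg'_nonneg ht hl hr
  calc eLpNorm (deriv (ω t)) p volume
      = eLpNorm (fun x => g' (Y t x) / (1 + t * g' (Y t x))) p volume := by
        rw [funext fun x => (hω_deriv x).deriv]
    _ ≤ ENNReal.ofReal (max ((ωp - ωm) / 2) 1 / (δ + t)) ^ (1 - r)
          * ENNReal.ofReal (ωp - ωm) ^ r :=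
        eLpNorm_le_of_hasDerivAt_of_mem_Icc hω_deriv
          (fun x => div_nonneg (hg'_nonneg _) (by nlinarith [mul_nonneg ht (hg'_nonneg (Y t x))]))
          (fun x => div_one_add_mul_le_max_div (hg'_nonneg _)
            (mul_div_div_cosh_sq_le (by linarith) hδ _) hδ ht)
          (fun x => hω t x ▸ hg _ ▸ midpoint_add_mul_tanh_mem_Icc hlt.le _) hp
    _ = _ := ofReal_div_rpow_mul_ofReal_rpow (by positivity) (by positivity) hs.le
          (by positivity) (ENNReal.one_div_toReal_le_one hp)
end

section
/- There exists a constant C > 0, depending only on ω₋ and ω₊, such that for all δ ∈ (0,1) and all t > 0 one has sup_{x ∈ ℝ} |ω(t,x) − ω^R(x/t)| ≤ C·δ·t^{−1}·(ln(1+t) + |ln δ|). -/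
/-!
Write `w = ω(t, x)` and `y = Y(t, x)`, so that `x = y + t w`. Inverting `tanh` gives
`δ (log (w - ω₋) - log (ω₊ - w)) = 2 y = 2 t (x / t - w)`. Since `ω^R(x/t)` lies in
`[ω₋, ω₊]` and on the same side of `w` as `x / t` whenever it differs from `w`, the error
`E = |w - ω^R(x/t)|` satisfies `2 t E ≤ δ (log (ω₊ - ω₋) - log E)`: it is exponentially
small in `t E / δ`. Hence `t E ≤ δ (1 + |log (ω₊ - ω₋)| + log (1 + t) + |log δ|)`, and when
`log (1 + t) + |log δ|` is small the trivial bound `E ≤ ω₊ - ω₋` takes over.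
-/

open Real

noncomputable def tanhProfile (m p v : ℝ) : ℝ := (p + m) / 2 + (p - m) / 2 * tanh v

section TanhProfile

variable {m p : ℝ}

lemma left_lt_tanhProfile (hmp : m < p) (v : ℝ) : m < tanhProfile m p v := by
  unfold tanhProfile; nlinarith [neg_one_lt_tanh v]

lemma tanhProfile_lt_right (hmp : m < p) (v : ℝ) : tanhProfile m p v < p := by
  unfold tanhProfile; nlinarith [tanh_lt_one v]

lemma log_sub_log_tanhProfile (hmp : m < p) (v : ℝ) :
    log (tanhProfile m p v - m) - log (p - tanhProfile m p v) = 2 * v := by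
  have h1 : 0 < 1 + tanh v := by linarith [neg_one_lt_tanh v]
  have h2 : 0 < 1 - tanh v := by linarith [tanh_lt_one v]
  have hd : (p - m) / 2 ≠ 0 := by linarith
  rw [show tanhProfile m p v - m = (p - m) / 2 * (1 + tanh v) by unfold tanhProfile; ring,
    show p - tanhProfile m p v = (p - m) / 2 * (1 - tanh v) by unfold tanhProfile; ring,
    ← log_div (by positivity) (by positivity), mul_div_mul_left _ _ hd]
  conv_rhs => rw [← artanh_tanh v, artanh_eq_half_log ⟨by linarith, by linarith⟩]
  ring

end TanhProfile

noncomputable def rarefactionProfile (m p z : ℝ) : ℝ :=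
  if z ≤ m then m else if z ≤ p then z else p

section RarefactionProfile

variable {m p z : ℝ}

lemma left_le_rarefactionProfile (hmp : m ≤ p) : m ≤ rarefactionProfile m p z := by
  unfold rarefactionProfile; split_ifs <;> linarith

lemma rarefactionProfile_le_right (hmp : m ≤ p) : rarefactionProfile m p z ≤ p := by
  unfold rarefactionProfile; split_ifs <;> linarith

lemma le_rarefactionProfile_of_lt_right (h : rarefactionProfile m p z < p) :
    z ≤ rarefactionProfile m p z := by
  unfold rarefactionProfile at *; split_ifs at * <;> linarith

lemma rarefactionProfile_le_of_left_lt (h : m < rarefactionProfile m p z) :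
    rarefactionProfile m p z ≤ z := by
  unfold rarefactionProfile at *; split_ifs at * <;> linarith

lemma abs_sub_rarefactionProfile_le {w : ℝ} (hmw : m ≤ w) (hwp : w ≤ p) :
    |w - rarefactionProfile m p z| ≤ p - m := by
  have := left_le_rarefactionProfile (z := z) (hmw.trans hwp)
  have := rarefactionProfile_le_right (z := z) (hmw.trans hwp)
  rw [abs_sub_le_iff]; constructor <;> linarith

end RarefactionProfile

lemma mul_log_sub_log_le {δ a b d E : ℝ} (hδ : 0 ≤ δ) (hE : 0 < E) (hEa : E ≤ a)
    (hb : 0 < b) (hbd : b ≤ d) : δ * (log b - log a) ≤ δ * (log d - log E) := by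
  have := log_le_log hE hEa
  have := log_le_log hb hbd
  exact mul_le_mul_of_nonneg_left (by linarith) hδ

lemma two_mul_abs_sub_rarefactionProfile_le {m p w δ t z : ℝ} (hmw : m < w) (hwp : w < p)
    (hδ : 0 ≤ δ) (ht : 0 < t)
    (hchar : δ * (log (w - m) - log (p - w)) = 2 * t * (z - w))
    (hE : 0 < |w - rarefactionProfile m p z|) :
    2 * t * |w - rarefactionProfile m p z| ≤
      δ * (log (p - m) - log |w - rarefactionProfile m p z|) := by
  have hmr := left_le_rarefactionProfile (z := z) (hmw.trans hwp).le
  have hrp := rarefactionProfile_le_right (z := z) (hmw.trans hwp).le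
  set r := rarefactionProfile m p z
  rcases le_or_gt r w with hrw | hwr
  · have hzr : z ≤ r := le_rarefactionProfile_of_lt_right (hrw.trans_lt hwp)
    rw [abs_of_nonneg (sub_nonneg.2 hrw)] at hE ⊢
    calc 2 * t * (w - r) ≤ 2 * t * (w - z) := by gcongr
      _ = δ * (log (p - w) - log (w - m)) := by linear_combination hchar
      _ ≤ δ * (log (p - m) - log (w - r)) :=
        mul_log_sub_log_le hδ hE (by linarith) (by linarith) (by linarith)
  · have hrz : r ≤ z := rarefactionProfile_le_of_left_lt (hmw.trans hwr)
    rw [abs_of_neg (sub_neg.2 hwr), neg_sub] at hE ⊢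
    calc 2 * t * (r - w) ≤ 2 * t * (z - w) := by gcongr
      _ = δ * (log (w - m) - log (p - w)) := hchar.symm
      _ ≤ δ * (log (p - m) - log (r - w)) :=
        mul_log_sub_log_le hδ hE (by linarith) (by linarith) (by linarith)

section LogEstimates

variable {d δ t E : ℝ}

lemma mul_le_of_two_mul_le_log_sub_log (hδ : 0 < δ) (ht : 0 < t) (hE : 0 < E)
    (h : 2 * t * E ≤ δ * (log d - log E)) :
    t * E ≤ δ * (1 + |log d| + (log (1 + t) + |log δ|)) := by
  have hlogt : log t ≤ log (1 + t) := log_le_log ht (by linarith)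
  have hlogδ : -log δ ≤ |log δ| := neg_le_abs _
  have hlogd : log d ≤ |log d| := le_abs_self _
  rcases le_or_gt (t * E) δ with hsmall | hlarge
  · have hL : 0 ≤ |log d| + (log (1 + t) + |log δ|) := by
      have := log_nonneg (show 1 ≤ 1 + t by linarith)
      positivity
    calc t * E ≤ δ * 1 := by linarith
      _ ≤ δ * (1 + |log d| + (log (1 + t) + |log δ|)) := by gcongr; linarith
  · have hlogE : log δ < log t + log E := by
      rw [← log_mul ht.ne' hE.ne']; exact log_lt_log hδ hlarge
    calc t * E ≤ 2 * t * E := by nlinarith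
      _ ≤ δ * (log d - log E) := h
      _ ≤ δ * (1 + |log d| + (log (1 + t) + |log δ|)) := by gcongr; linarith

lemma le_four_mul_mul_of_log_lt_log_two (hδ : 0 < δ) (ht : 0 < t)
    (hL : log (1 + t) + |log δ| < log 2) :
    t ≤ 4 * δ * (log (1 + t) + |log δ|) := by
  have ht1 : t < 1 := by
    have : log (1 + t) < log 2 := by linarith [abs_nonneg (log δ)]
    linarith [(log_lt_log_iff (by linarith) two_pos).1 this]
  have hδ2 : 1 / 2 < δ := by
    have : log (1 / 2) < log δ := by
      rw [one_div, log_inv]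
      linarith [neg_abs_le (log δ), log_nonneg (show 1 ≤ 1 + t by linarith)]
    exact (log_lt_log_iff one_half_pos hδ).1 this
  have hlog : t / 2 ≤ log (1 + t) := by
    have := one_sub_inv_le_log_of_pos (show 0 < 1 + t by linarith)
    have : t / 2 ≤ 1 - (1 + t)⁻¹ := by
      rw [show 1 - (1 + t)⁻¹ = t / (1 + t) by field_simp; ring]
      exact div_le_div_of_nonneg_left ht.le (by linarith) (by linarith)
    linarith
  nlinarith [abs_nonneg (log δ)]

/-- `4 d` serves the regime `log (1 + t) + |log δ| < log 2`, where `t < 1` and `δ > 1/2`;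
the other terms serve the complementary one. -/
noncomputable def rarefactionConst (d : ℝ) : ℝ := 4 * d + (1 + |log d|) / log 2 + 1

lemma rarefactionConst_pos (hd : 0 ≤ d) : 0 < rarefactionConst d := by
  unfold rarefactionConst; positivity

lemma le_rarefactionConst_mul (hδ : 0 < δ) (ht : 0 < t) (hE0 : 0 ≤ E) (hEd : E ≤ d)
    (h : 0 < E → 2 * t * E ≤ δ * (log d - log E)) :
    E ≤ rarefactionConst d * δ * t⁻¹ * (log (1 + t) + |log δ|) := by
  set L := log (1 + t) + |log δ|
  set C := rarefactionConst d
  have hd : 0 ≤ d := hE0.trans hEd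
  have hL : 0 < L := by
    have := log_pos (show 1 < 1 + t by linarith)
    positivity
  have hCd : 4 * d ≤ C := by
    have : 0 ≤ (1 + |log d|) / log 2 := by positivity
    simp only [C, rarefactionConst]; linarith
  suffices t * E ≤ C * δ * L by
    rwa [show C * δ * t⁻¹ * L = C * δ * L / t by ring, le_div_iff₀ ht, mul_comm]
  rcases lt_or_ge L (log 2) with hsmall | hlarge
  · calc t * E ≤ t * d := by gcongr
      _ ≤ 4 * δ * L * d := by gcongr; exact le_four_mul_mul_of_log_lt_log_two hδ ht hsmall
      _ = 4 * d * (δ * L) := by ring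
      _ ≤ C * δ * L := by rw [mul_assoc C]; gcongr
  · rcases hE0.eq_or_lt with rfl | hE
    · rw [mul_zero]; exact mul_nonneg (mul_nonneg (rarefactionConst_pos hd).le hδ.le) hL.le
    have hconst : 1 + |log d| ≤ (1 + |log d|) / log 2 * L := by
      rw [div_mul_eq_mul_div, le_div_iff₀ (log_pos one_lt_two)]
      gcongr
    calc t * E ≤ δ * (1 + |log d| + L) := mul_le_of_two_mul_le_log_sub_log hδ ht hE (h hE)
      _ ≤ δ * (C * L) := by
        gcongr
        simp only [C, rarefactionConst]
        nlinarith
      _ = C * δ * L := by ring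

end LogEstimates

/-- Uniform convergence of the smooth approximate rarefaction wave to the centered
rarefaction wave `ω^R(z)` (`= ω₋` for `z ≤ ω₋`, `= z` for `ω₋ < z ≤ ω₊`, `= ω₊` for
`z > ω₊`): there is `C > 0` depending only on `ω₋, ω₊` such that for all `δ ∈ (0,1)`
and `t > 0`, `sup_x |ω(t,x) − ω^R(x/t)| ≤ C δ t⁻¹ (ln(1+t) + |ln δ|)`. -/
theorem burgers_rarefaction_convergence
    (ωm ωp : ℝ) (hω : ωm < ωp) :
    ∃ C : ℝ, 0 < C ∧
      ∀ δ : ℝ, 0 < δ → δ < 1 →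
      ∀ g : ℝ → ℝ,
        (∀ x : ℝ, g x = (ωp + ωm) / 2 + ((ωp - ωm) / 2) * Real.tanh (x / δ)) →
      ∀ Y : ℝ → ℝ → ℝ,
        (∀ t : ℝ, 0 ≤ t →
          Function.LeftInverse (Y t) (fun y : ℝ => y + t * g y) ∧
          Function.RightInverse (Y t) (fun y : ℝ => y + t * g y)) →
      ∀ ω : ℝ → ℝ → ℝ, (∀ t x : ℝ, ω t x = g (Y t x)) →
      ∀ t : ℝ, 0 < t → ∀ x : ℝ,
        |ω t x - (if x / t ≤ ωm then ωm else if x / t ≤ ωp then x / t else ωp)|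
          ≤ C * δ * t⁻¹ * (Real.log (1 + t) + |Real.log δ|) := by
  refine ⟨rarefactionConst (ωp - ωm), rarefactionConst_pos (by linarith), ?_⟩
  intro δ hδ _ g hg Y hY ω hωg t ht x
  have hfoot : Y t x + t * ω t x = x := by rw [hωg]; exact (hY t ht.le).2 x
  have hw : ω t x = tanhProfile ωm ωp (Y t x / δ) := by rw [hωg, hg]; rfl
  have hmw : ωm < ω t x := hw ▸ left_lt_tanhProfile hω _
  have hwp : ω t x < ωp := hw ▸ tanhProfile_lt_right hω _
  have hchar : δ * (log (ω t x - ωm) - log (ωp - ω t x)) = 2 * t * (x / t - ω t x) := by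
    rw [hw, log_sub_log_tanhProfile hω, ← hw]
    field_simp
    linarith
  change |ω t x - rarefactionProfile ωm ωp (x / t)| ≤ _
  exact le_rarefactionConst_mul hδ ht (abs_nonneg _)
    (abs_sub_rarefactionProfile_le hmw.le hwp.le)
    (two_mul_abs_sub_rarefactionProfile_le hmw hwp hδ.le ht hchar)
end

section
/- There exists a constant C > 1 such that for all ρ, ρ̄ ∈ [1/2, 2], all θ, θ̄ ∈ [1, 3] and all u, ū ∈ ℝ³, the relative entropy η := ρ·θ̄·Ψ(ρ̄/ρ) + (3/2)·ρ·θ̄·Ψ(θ/θ̄) + (3/4)·ρ·|u − ū|² satisfies C^{−1}·(|ρ − ρ̄|² + |u − ū|² + |θ − θ̄|²) ≤ η ≤ C·(|ρ − ρ̄|² + |u − ū|² + |θ − θ̄|²). -/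
/-!
`Ψ` vanishes to second order at `1`: the inequality `log t ≤ t - 1` at `t = √s` gives
`(√s - 1)² ≤ Ψ s`, and at `t = 1/s` it gives `s Ψ s ≤ (s - 1)²`. Scaling `s = b / a` shows that
`a Ψ(b/a)` is comparable to `(b - a)²` for `a, b` in a compact subinterval of `(0, ∞)`, which
handles the density and temperature terms; the velocity term is already quadratic.
-/

/-- `Ψ(s) = s − ln s − 1`. -/
noncomputable def Ψ (s : ℝ) : ℝ := s - Real.log s - 1

open Real Set

lemma sq_sqrt_sub_one_le_Ψ {s : ℝ} (hs : 0 < s) : (√s - 1) ^ 2 ≤ Ψ s := by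
  have hlog : log s = 2 * log √s := by rw [log_sqrt hs.le]; ring
  have := log_le_sub_one_of_pos (sqrt_pos.2 hs)
  have := sq_sqrt hs.le
  unfold Ψ
  nlinarith

lemma sq_sub_one_le_mul_Ψ {s k : ℝ} (hs : 0 < s) (hk : 0 ≤ k) (hsk : s ≤ k ^ 2) :
    (s - 1) ^ 2 ≤ (k + 1) ^ 2 * Ψ s := by
  have hsqrt : √s ≤ k := sqrt_le_iff.2 ⟨hk, hsk⟩
  have hΨ := sq_sqrt_sub_one_le_Ψ hs
  calc (s - 1) ^ 2 = (√s + 1) ^ 2 * (√s - 1) ^ 2 := by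
        rw [← mul_pow, ← sq_sub_sq, one_pow, sq_sqrt hs.le]
    _ ≤ (k + 1) ^ 2 * Ψ s := by gcongr

lemma mul_Ψ_le_sq_sub_one {s : ℝ} (hs : 0 < s) : s * Ψ s ≤ (s - 1) ^ 2 := by
  have hlog := one_sub_inv_le_log_of_pos hs
  have : s * s⁻¹ = 1 := mul_inv_cancel₀ hs.ne'
  unfold Ψ
  nlinarith

lemma sq_sub_le_mul_mul_Ψ_div {a b k : ℝ} (ha : 0 < a) (hb : 0 < b) (hk : 0 ≤ k)
    (hba : b ≤ k ^ 2 * a) : (b - a) ^ 2 ≤ (k + 1) ^ 2 * a * (a * Ψ (b / a)) := by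
  have h := sq_sub_one_le_mul_Ψ (div_pos hb ha) hk ((div_le_iff₀ ha).2 hba)
  calc (b - a) ^ 2 = a ^ 2 * (b / a - 1) ^ 2 := by field_simp
    _ ≤ a ^ 2 * ((k + 1) ^ 2 * Ψ (b / a)) := by gcongr
    _ = (k + 1) ^ 2 * a * (a * Ψ (b / a)) := by ring

lemma mul_mul_Ψ_div_le_sq_sub {a b : ℝ} (ha : 0 < a) (hb : 0 < b) :
    b * (a * Ψ (b / a)) ≤ (b - a) ^ 2 := by
  have h := mul_Ψ_le_sq_sub_one (div_pos hb ha)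
  calc b * (a * Ψ (b / a)) = a ^ 2 * (b / a * Ψ (b / a)) := by field_simp
    _ ≤ a ^ 2 * (b / a - 1) ^ 2 := by gcongr
    _ = (b - a) ^ 2 := by field_simp

lemma mul_Ψ_div_mem_Icc {a b m M k : ℝ} (hm : 0 < m) (hk : 0 ≤ k) (hMm : M ≤ k ^ 2 * m)
    (ha : a ∈ Icc m M) (hb : b ∈ Icc m M) :
    a * Ψ (b / a) ∈ Icc ((b - a) ^ 2 / ((k + 1) ^ 2 * M)) ((b - a) ^ 2 / m) := by
  obtain ⟨ha₁, ha₂⟩ := ha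
  obtain ⟨hb₁, hb₂⟩ := hb
  have ha₀ : 0 < a := hm.trans_le ha₁
  have hb₀ : 0 < b := hm.trans_le hb₁
  have hΨ₀ : 0 ≤ a * Ψ (b / a) :=
    mul_nonneg ha₀.le ((sq_nonneg _).trans (sq_sqrt_sub_one_le_Ψ (div_pos hb₀ ha₀)))
  have hba : b ≤ k ^ 2 * a := by nlinarith
  constructor
  · rw [div_le_iff₀ (by nlinarith)]
    calc (b - a) ^ 2 ≤ (k + 1) ^ 2 * a * (a * Ψ (b / a)) :=
          sq_sub_le_mul_mul_Ψ_div ha₀ hb₀ hk hba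
      _ ≤ (k + 1) ^ 2 * M * (a * Ψ (b / a)) := by gcongr
      _ = _ := by ring
  · rw [le_div_iff₀ hm]
    calc a * Ψ (b / a) * m ≤ b * (a * Ψ (b / a)) := by nlinarith
      _ ≤ (b - a) ^ 2 := mul_mul_Ψ_div_le_sq_sub ha₀ hb₀

/-- Equivalence of the relative entropy
`η = ρθ̄Ψ(ρ̄/ρ) + (3/2)ρθ̄Ψ(θ/θ̄) + (3/4)ρ|u−ū|²` with the squared distance
`|ρ−ρ̄|² + |u−ū|² + |θ−θ̄|²`, uniformly for `ρ, ρ̄ ∈ [1/2,2]`, `θ, θ̄ ∈ [1,3]`. -/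
theorem relative_entropy_equivalence :
    ∃ C : ℝ, 1 < C ∧
      ∀ (ρ ρb θ θb : ℝ) (u ub : EuclideanSpace ℝ (Fin 3)),
        ρ ∈ Set.Icc (1 / 2 : ℝ) 2 → ρb ∈ Set.Icc (1 / 2 : ℝ) 2 →
        θ ∈ Set.Icc (1 : ℝ) 3 → θb ∈ Set.Icc (1 : ℝ) 3 →
        C⁻¹ * (|ρ - ρb| ^ 2 + ‖u - ub‖ ^ 2 + |θ - θb| ^ 2)
            ≤ ρ * θb * Ψ (ρb / ρ) + (3 / 2) * ρ * θb * Ψ (θ / θb)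
              + (3 / 4) * ρ * ‖u - ub‖ ^ 2 ∧
          ρ * θb * Ψ (ρb / ρ) + (3 / 2) * ρ * θb * Ψ (θ / θb)
              + (3 / 4) * ρ * ‖u - ub‖ ^ 2
            ≤ C * (|ρ - ρb| ^ 2 + ‖u - ub‖ ^ 2 + |θ - θb| ^ 2) := by
  refine ⟨36, by norm_num, ?_⟩
  rintro ρ ρb θ θb u ub hρ hρb hθ hθb
  obtain ⟨hx₁, hx₂⟩ := mul_Ψ_div_mem_Icc (k := 2) (by norm_num) (by norm_num) (by norm_num) hρ hρb
  obtain ⟨hy₁, hy₂⟩ := mul_Ψ_div_mem_Icc (k := 2) (by norm_num) (by norm_num) (by norm_num) hθb hθ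
  obtain ⟨hρ₁, hρ₂⟩ := hρ
  obtain ⟨hθb₁, hθb₂⟩ := hθb
  set x := ρ * Ψ (ρb / ρ)
  set y := θb * Ψ (θ / θb)
  have hx₀ : 0 ≤ x := (by positivity : (0 : ℝ) ≤ _).trans hx₁
  have hy₀ : 0 ≤ y := (by positivity : (0 : ℝ) ≤ _).trans hy₁
  have hη : ρ * θb * Ψ (ρb / ρ) + 3 / 2 * ρ * θb * Ψ (θ / θb) + 3 / 4 * ρ * ‖u - ub‖ ^ 2
      = θb * x + 3 / 2 * ρ * y + 3 / 4 * ρ * ‖u - ub‖ ^ 2 := by ring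
  -- `x` lies in `[(ρ - ρb)²/18, 2(ρ - ρb)²]` and `y` in `[(θ - θb)²/27, (θ - θb)²]`.
  rw [hη, sq_abs, sq_abs]
  have hN := sq_nonneg ‖u - ub‖
  constructor
  · nlinarith [mul_nonneg (sub_nonneg.2 hθb₁) hx₀, mul_nonneg (sub_nonneg.2 hρ₁) hy₀,
      mul_nonneg (sub_nonneg.2 hρ₁) hN]
  · nlinarith [mul_nonneg (sub_nonneg.2 hθb₂) hx₀, mul_nonneg (sub_nonneg.2 hρ₂) hy₀,
      mul_nonneg (sub_nonneg.2 hρ₂) hN]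
end

section
/- There exist constants c > 0 and r ∈ (0,1) such that the following holds: for all x₁, x₂ > 0 with |x₁ − 1| < r and |x₂ − 1| < r, all θ̄ ∈ [1, 3], all Δ ∈ ℝ, all β > 0 and all γ ∈ ℝ with γ² ≤ (1/4)·θ̄·β², one has (3/2)·β·Δ² + (2/3)·θ̄·β·Ψ(x₁) + θ̄·β·Ψ(x₂) + (3/2)·γ·Δ·((2/3)·ln x₁ + ln x₂) ≥ c·β·((x₁ − 1)² + Δ² + (x₂ − 1)²). -/
open Real Finset

lemma abs_log_le_of_abs_sub_one_le {x r : ℝ} (hr : r < 1) (hx : |x - 1| ≤ r) :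
    |log x| ≤ |x - 1| / (1 - r) := by
  have ht : |1 - x| < 1 := by rw [abs_sub_comm]; linarith
  have h := abs_log_sub_add_sum_range_le ht 0
  simp only [range_zero, sum_empty, zero_add, sub_sub_cancel, pow_one] at h
  rw [abs_sub_comm] at h
  exact h.trans (div_le_div_of_nonneg_left (abs_nonneg _) (by linarith) (by linarith))

lemma mul_sq_le_Ψ {x r : ℝ} (hr : r < 1) (hx : |x - 1| ≤ r) :
    (1 / 2 - r / (1 - r)) * (x - 1) ^ 2 ≤ Ψ x := by
  have ht : |1 - x| < 1 := by rw [abs_sub_comm]; linarith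
  have h := abs_log_sub_add_sum_range_le ht 2
  simp only [sum_range_succ, range_zero, sum_empty, sub_sub_cancel] at h
  rw [abs_sub_comm 1 x] at h
  have hr' : 0 < 1 - r := by linarith
  have herr : |x - 1| ^ 3 / (1 - |x - 1|) ≤ r / (1 - r) * (x - 1) ^ 2 := by
    rw [div_le_iff₀ (by linarith), ← sq_abs (x - 1)]
    have : |x - 1| ≤ r / (1 - r) * (1 - |x - 1|) := by
      rw [div_mul_eq_mul_div, le_div_iff₀ hr']; nlinarith [abs_nonneg (x - 1)]
    nlinarith [sq_nonneg |x - 1|]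
  have hremainder := (abs_le.1 (h.trans herr)).2
  -- with `t = 1 - x`: `Ψ x = t² / 2 - (t + t² / 2 + log (1 - t))`
  unfold Ψ
  nlinarith [hremainder]

lemma neg_le_cross_term {θ β γ Δ L : ℝ} (hβ : 0 < β) (hγ : γ ^ 2 ≤ 1 / 4 * θ * β ^ 2) :
    -(β * Δ ^ 2 + 9 / 64 * θ * β * L ^ 2) ≤ 3 / 2 * γ * Δ * L := by
  have key : 0 ≤ β * (β * Δ ^ 2 + 9 / 64 * θ * β * L ^ 2 + 3 / 2 * γ * Δ * L) :=
    calc 0 ≤ (β * Δ + 3 / 4 * γ * L) ^ 2 + 9 / 16 * L ^ 2 * (1 / 4 * θ * β ^ 2 - γ ^ 2) :=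
          add_nonneg (sq_nonneg _) (mul_nonneg (by positivity) (sub_nonneg.2 hγ))
      _ = _ := by ring
  linarith [(mul_nonneg_iff_of_pos_left hβ).1 key]

-- `15/64 = (9/64) (5/3)`: the cross-term weight on `L²` times the Cauchy–Schwarz constant.
lemma sq_div_twelve_le_Ψ_sub_log_sq {x : ℝ} (hx : |x - 1| ≤ 1 / 10) :
    (x - 1) ^ 2 / 12 ≤ Ψ x - 15 / 64 * log x ^ 2 := by
  have hΨ := mul_sq_le_Ψ (by norm_num) hx
  have hlog := abs_log_le_of_abs_sub_one_le (by norm_num) hx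
  have hlog_sq : log x ^ 2 ≤ 100 / 81 * (x - 1) ^ 2 := by
    have := pow_le_pow_left₀ (abs_nonneg _) hlog 2
    norm_num [div_pow, sq_abs] at this
    linarith
  norm_num at hΨ
  linarith [sq_nonneg (x - 1)]

/-- Algebraic core of the entropy–entropy flux lower bound along the rarefaction
wave: there exist `c > 0` and `r ∈ (0,1)` such that for all `x₁, x₂ > 0` within `r`
of `1`, all `θ̄ ∈ [1,3]`, `Δ ∈ ℝ`, `β > 0` and `γ` with `γ² ≤ (1/4)θ̄β²`,
`(3/2)βΔ² + (2/3)θ̄βΨ(x₁) + θ̄βΨ(x₂) + (3/2)γΔ((2/3)ln x₁ + ln x₂)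
  ≥ cβ((x₁−1)² + Δ² + (x₂−1)²)`. -/
theorem entropy_flux_lower_bound_core :
    ∃ c : ℝ, 0 < c ∧ ∃ r : ℝ, 0 < r ∧ r < 1 ∧
      ∀ x₁ x₂ : ℝ, 0 < x₁ → 0 < x₂ → |x₁ - 1| < r → |x₂ - 1| < r →
      ∀ θb : ℝ, θb ∈ Set.Icc (1 : ℝ) 3 →
      ∀ Δ β γ : ℝ, 0 < β → γ ^ 2 ≤ 1 / 4 * θb * β ^ 2 →
        c * β * ((x₁ - 1) ^ 2 + Δ ^ 2 + (x₂ - 1) ^ 2)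
          ≤ 3 / 2 * β * Δ ^ 2 + 2 / 3 * θb * β * Ψ x₁ + θb * β * Ψ x₂
            + 3 / 2 * γ * Δ * (2 / 3 * Real.log x₁ + Real.log x₂) := by
  refine ⟨1 / 18, by norm_num, 1 / 10, by norm_num, by norm_num, ?_⟩
  intro x₁ x₂ _ _ hx₁ hx₂ θb ⟨hθ, _⟩ Δ β γ hβ hγ
  set L := 2 / 3 * log x₁ + log x₂
  have hcross := neg_le_cross_term (Δ := Δ) (L := L) hβ hγ
  have hL : L ^ 2 ≤ 5 / 3 * (2 / 3 * log x₁ ^ 2 + log x₂ ^ 2) := by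
    simp only [L]
    nlinarith [sq_nonneg (log x₁ - log x₂)]
  have h₁ := sq_div_twelve_le_Ψ_sub_log_sq hx₁.le
  have h₂ := sq_div_twelve_le_Ψ_sub_log_sq hx₂.le
  have hbracket : ((x₁ - 1) ^ 2 + (x₂ - 1) ^ 2) / 18
      ≤ 2 / 3 * Ψ x₁ + Ψ x₂ - 9 / 64 * L ^ 2 := by
    linarith [sq_nonneg (x₂ - 1)]
  have hθβ : β * (((x₁ - 1) ^ 2 + (x₂ - 1) ^ 2) / 18)
      ≤ θb * β * (2 / 3 * Ψ x₁ + Ψ x₂ - 9 / 64 * L ^ 2) :=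
    mul_le_mul (le_mul_of_one_le_left hβ.le hθ) hbracket (by positivity) (by positivity)
  linarith [mul_nonneg hβ.le (sq_nonneg Δ)]
end
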